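/- For all integers k, ℓ with 0 ≤ k < ℓ: P(Ñ_1 + ... + Ñ_ℓ > 0 and K^(ℓ) = k) = P(Ñ = 0)^k · P(Ñ > 0). -/

import Mathlib

open MeasureTheory ProbabilityTheory

/-- The minimum of `f` over a finite set of indices, with the convention that the minimum
of the empty collection is `d`. -/
noncomputable def minOr (d : ℝ) (s : Finset ℕ) (f : ℕ → ℝ) : ℝ :=
  if h : s.Nonempty then (s.image f).min' (h.image f) else d

/-!
Order the indices `0, …, ℓ - 1` by their marks `U`; almost surely there are no ties. The event
`{∑ Ñ_j > 0, K = k}` says exactly that the index `m` of rank `k` has `Ñ_m ≥ 1` while the `k`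
indices `B` below it have `Ñ_j = 0`. Splitting over the possible pairs `(m, B)`, each piece is the
intersection of an event of the `Ñ`'s, of probability `P(Ñ > 0) P(Ñ = 0)^k`, with the independent
event "`B` is the set of indices below `m`"; these last events partition `Ω` up to null sets.
-/

open Finset Function

section Ranks

variable {ι α : Type*} [LinearOrder α]

def belowSet (s : Finset ι) (u : ι → α) (m : ι) : Finset ι :=
  s.filter fun j => u j < u m

lemma self_notMem_belowSet (s : Finset ι) (u : ι → α) (m : ι) : m ∉ belowSet s u m := by
  simp [belowSet]

lemma belowSet_subset (s : Finset ι) (u : ι → α) (m : ι) : belowSet s u m ⊆ s :=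
  filter_subset _ _

lemma card_belowSet_lt_card_belowSet {s : Finset ι} {u : ι → α} {i j : ι} (hi : i ∈ s)
    (hij : u i < u j) : #(belowSet s u i) < #(belowSet s u j) := by
  refine card_lt_card ⟨fun x hx => ?_, fun h => self_notMem_belowSet s u i (h ?_)⟩
  · simp only [belowSet, mem_filter] at hx ⊢
    exact ⟨hx.1, hx.2.trans hij⟩
  · simpa [belowSet] using ⟨hi, hij⟩

lemma injOn_card_belowSet {s : Finset ι} {u : ι → α} (hu : Set.InjOn u s) :
    Set.InjOn (fun m => #(belowSet s u m)) s := by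
  intro i hi j hj hij
  by_contra hne
  rcases (hu.ne hi hj hne).lt_or_gt with h | h
  · exact (card_belowSet_lt_card_belowSet hi h).ne hij
  · exact (card_belowSet_lt_card_belowSet hj h).ne' hij

lemma exists_card_belowSet_eq {s : Finset ι} {u : ι → α} (hu : Set.InjOn u s) {k : ℕ}
    (hk : k < #s) : ∃ m ∈ s, #(belowSet s u m) = k := by
  have hmaps : Set.MapsTo (fun m => #(belowSet s u m)) s (range #s) := fun m hm =>
    mem_range.2 (card_lt_card ⟨belowSet_subset s u m,
      fun h => self_notMem_belowSet s u m (h hm)⟩)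
  obtain ⟨m, hm, hmk⟩ := surjOn_of_injOn_of_card_le _ hmaps (injOn_card_belowSet hu)
    (card_range _).le (mem_range.2 hk)
  exact ⟨m, hm, hmk⟩

variable [DecidableEq ι]

/-- The pairs `(m, B)` that can occur as (index of rank `k` in `s`, the `k` indices below it). -/
def rankPairs (s : Finset ι) (k : ℕ) : Finset (ι × Finset ι) :=
  (s ×ˢ s.powersetCard k).filter fun p => p.1 ∉ p.2

lemma mem_rankPairs {s : Finset ι} {k : ℕ} {p : ι × Finset ι} :
    p ∈ rankPairs s k ↔ p.1 ∈ s ∧ p.2 ⊆ s ∧ #p.2 = k ∧ p.1 ∉ p.2 := by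
  simp [rankPairs, and_assoc]

lemma mem_rankPairs_iff_of_eq_belowSet {s : Finset ι} {u : ι → α} {k : ℕ} {p : ι × Finset ι}
    (hp : p.2 = belowSet s u p.1) : p ∈ rankPairs s k ↔ p.1 ∈ s ∧ #(belowSet s u p.1) = k := by
  simp [mem_rankPairs, hp, belowSet_subset, self_notMem_belowSet]

lemma eq_of_mem_rankPairs_of_eq_belowSet {s : Finset ι} {u : ι → α} (hu : Set.InjOn u s)
    {k : ℕ} {p q : ι × Finset ι} (hp : p ∈ rankPairs s k) (hq : q ∈ rankPairs s k)
    (hpu : p.2 = belowSet s u p.1) (hqu : q.2 = belowSet s u q.1) : p = q := by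
  obtain ⟨hp₁, hpk⟩ := (mem_rankPairs_iff_of_eq_belowSet hpu).1 hp
  obtain ⟨hq₁, hqk⟩ := (mem_rankPairs_iff_of_eq_belowSet hqu).1 hq
  have h₁ : p.1 = q.1 := injOn_card_belowSet hu hp₁ hq₁ (hpk.trans hqk.symm)
  exact Prod.ext h₁ (by rw [hpu, hqu, h₁])

lemma exists_rankPairs_iff {s : Finset ι} {u : ι → α} {k : ℕ} (Q : ι → Finset ι → Prop) :
    (∃ p ∈ rankPairs s k, Q p.1 p.2 ∧ p.2 = belowSet s u p.1) ↔
      ∃ m ∈ s, #(belowSet s u m) = k ∧ Q m (belowSet s u m) := by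
  constructor
  · rintro ⟨⟨m, B⟩, hp, hQ, hB : B = belowSet s u m⟩
    subst hB
    exact ⟨m, ((mem_rankPairs_iff_of_eq_belowSet rfl).1 hp).1,
      ((mem_rankPairs_iff_of_eq_belowSet rfl).1 hp).2, hQ⟩
  · rintro ⟨m, hm, hmk, hQ⟩
    exact ⟨(m, belowSet s u m), (mem_rankPairs_iff_of_eq_belowSet rfl).2 ⟨hm, hmk⟩, hQ, rfl⟩

end Ranks

lemma minOr_eq_of_mem_of_le {d : ℝ} {t : Finset ℕ} {u : ℕ → ℝ} {m : ℕ} (hm : m ∈ t)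
    (hle : ∀ j ∈ t, u m ≤ u j) : minOr d t u = u m := by
  rw [minOr, dif_pos ⟨m, hm⟩]
  exact le_antisymm (min'_le _ _ (mem_image_of_mem u hm))
    (le_min' _ _ _ fun y hy => by obtain ⟨j, hj, rfl⟩ := mem_image.1 hy; exact hle j hj)

/-- When some `n j` is positive, the minimum is attained at an index `m` with `n m > 0`, and no
index below `m` can have `n j > 0`. -/
lemma pos_sum_and_card_filter_lt_minOr_iff (s : Finset ℕ) (n : ℕ → ℕ) (u : ℕ → ℝ) (k : ℕ) :
    (0 < ∑ j ∈ s, n j ∧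
      #(s.filter fun j => u j < minOr 2 (s.filter fun j => 1 ≤ n j) u) = k) ↔
    ∃ m ∈ s, #(belowSet s u m) = k ∧ 0 < n m ∧ ∀ j ∈ belowSet s u m, n j = 0 := by
  constructor
  · rintro ⟨hsum, hk⟩
    obtain ⟨j₀, hj₀, hn₀⟩ := exists_lt_of_sum_lt (by simpa using hsum : ∑ j ∈ s, 0 < ∑ j ∈ s, n j)
    obtain ⟨m, hm, hmin⟩ := exists_min_image (s.filter fun j => 1 ≤ n j) u
      ⟨j₀, mem_filter.2 ⟨hj₀, hn₀⟩⟩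
    rw [minOr_eq_of_mem_of_le hm hmin] at hk
    refine ⟨m, (mem_filter.1 hm).1, hk, (mem_filter.1 hm).2, fun j hj => ?_⟩
    obtain ⟨hjs, hjm⟩ := mem_filter.1 hj
    by_contra hnj
    exact (hmin j (mem_filter.2 ⟨hjs, Nat.one_le_iff_ne_zero.2 hnj⟩)).not_gt hjm
  · rintro ⟨m, hm, hk, hnm, hbelow⟩
    have hmin : ∀ j ∈ s.filter fun j => 1 ≤ n j, u m ≤ u j := fun j hj => by
      obtain ⟨hjs, hnj⟩ := mem_filter.1 hj
      by_contra hjm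
      exact Nat.one_le_iff_ne_zero.1 hnj (hbelow j (mem_filter.2 ⟨hjs, not_le.1 hjm⟩))
    refine ⟨hnm.trans_le (single_le_sum (fun _ _ => Nat.zero_le _) hm), ?_⟩
    rwa [minOr_eq_of_mem_of_le (mem_filter.2 ⟨hm, hnm⟩) hmin]

section Probability

variable {Ω ι β : Type*}

lemma measurable_of_iSup_comap [mβ : MeasurableSpace β] (X : ι → Ω → β) (i : ι) :
    Measurable[⨆ k, mβ.comap (X k)] (X i) :=
  Measurable.of_comap_le (le_iSup (fun k => mβ.comap (X k)) i)

lemma measurableSet_eq_belowSet [Countable ι] {α : Type*} [LinearOrder α] [TopologicalSpace α]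
    [OrderClosedTopology α] [SecondCountableTopology α] [MeasurableSpace α]
    [OpensMeasurableSpace α] {m : MeasurableSpace Ω} {U : ι → Ω → α}
    (hU : ∀ i, Measurable[m] (U i)) (s : Finset ι) (i : ι) (B : Finset ι) :
    MeasurableSet[m] {ω | B = belowSet s (fun j => U j ω) i} := by
  simp only [Finset.ext_iff, belowSet, mem_filter]
  exact measurableSet_setOfPred.2 (Measurable.forall fun j =>
    measurable_const.iff (measurable_const.and (measurableSet_lt (hU j) (hU i)).mem))

variable [MeasurableSpace Ω] {P : Measure Ω}

lemma ProbabilityTheory.IndepFun.measure_eq_eq_zero [MeasurableSpace β] [MeasurableEq β]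
    {X Y : Ω → β} [IsFiniteMeasure P] (hXY : IndepFun X Y P) (hX : Measurable X)
    (hY : Measurable Y) [NullSingletonClass (P.map X)] : P {ω | X ω = Y ω} = 0 := by
  have hdiag : MeasurableSet (Set.diagonal β) := measurableSet_diagonal
  rw [show {ω | X ω = Y ω} = (fun ω => (X ω, Y ω)) ⁻¹' Set.diagonal β from rfl,
    ← Measure.map_apply (hX.prodMk hY) hdiag,
    (indepFun_iff_map_prod_eq_prod_map_map hX.aemeasurable hY.aemeasurable).1 hXY,
    Measure.prod_apply_symm hdiag]
  simp [Set.preimage, Set.diagonal]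

lemma ProbabilityTheory.iIndepFun.ae_injective [Countable ι] [MeasurableSpace β]
    [MeasurableEq β] [IsFiniteMeasure P] {X : ι → Ω → β} (hX : iIndepFun X P)
    (hm : ∀ i, Measurable (X i)) [∀ i, NullSingletonClass (P.map (X i))] :
    ∀ᵐ ω ∂P, Injective fun i => X i ω := by
  have hne : ∀ i j, ∀ᵐ ω ∂P, i ≠ j → X i ω ≠ X j ω := fun i j => by
    by_cases hij : i = j
    · simp [hij]
    · have := (hX.indepFun hij).measure_eq_eq_zero (hm i) (hm j)
      exact (measure_eq_zero_iff_ae_notMem.1 this).mono fun ω hω _ => hω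
  filter_upwards [ae_all_iff.2 fun i => ae_all_iff.2 (hne i)] with ω hω i j hij
  by_contra h
  exact hω i j h hij

lemma ProbabilityTheory.iIndepFun.measure_mem_and_forall_mem [MeasurableSpace β] [DecidableEq ι]
    {X : ι → Ω → β} {Y : Ω → β} (hX : iIndepFun X P) (hid : ∀ i, IdentDistrib (X i) Y P P)
    {A C : Set β} (hA : MeasurableSet A) (hC : MeasurableSet C) {m : ι} {B : Finset ι}
    (hm : m ∉ B) :
    P {ω | X m ω ∈ A ∧ ∀ j ∈ B, X j ω ∈ C} = P (Y ⁻¹' A) * P (Y ⁻¹' C) ^ #B := by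
  let D : ι → Set β := fun j => if j = m then A else C
  have hD : ∀ j ∈ B, D j = C := fun j hj => if_neg (ne_of_mem_of_not_mem hj hm)
  have hset : {ω | X m ω ∈ A ∧ ∀ j ∈ B, X j ω ∈ C} = ⋂ j ∈ insert m B, X j ⁻¹' D j := by
    ext ω
    simp +contextual [D, hD]
  rw [hset, hX.meas_biInter fun j _ => ⟨D j, by unfold D; split_ifs <;> assumption, rfl⟩,
    prod_insert hm, prod_congr rfl fun j hj => by rw [hD j hj, (hid j).measure_mem_eq hC],
    prod_const, show D m = A from if_pos rfl, (hid m).measure_mem_eq hA]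

variable [DecidableEq ι] {s : Finset ι} {k : ℕ}

lemma pairwise_aedisjoint_eq_belowSet {α : Type*} [LinearOrder α] {U : ι → Ω → α}
    (hU : ∀ᵐ ω ∂P, Set.InjOn (fun i => U i ω) s) :
    (rankPairs s k : Set (ι × Finset ι)).Pairwise
      (AEDisjoint P on fun p => {ω | p.2 = belowSet s (fun i => U i ω) p.1}) := by
  intro p hp q hq hpq
  refine measure_eq_zero_iff_ae_notMem.2 (hU.mono fun ω hω hpq_mem => hpq ?_)
  exact eq_of_mem_rankPairs_of_eq_belowSet hω hp hq hpq_mem.1 hpq_mem.2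

lemma sum_rankPairs_measure_eq_belowSet_eq_one [Countable ι] [IsProbabilityMeasure P] {α : Type*}
    [LinearOrder α] [TopologicalSpace α] [OrderClosedTopology α] [SecondCountableTopology α]
    [MeasurableSpace α] [OpensMeasurableSpace α] {U : ι → Ω → α} (hm : ∀ i, Measurable (U i))
    (hU : ∀ᵐ ω ∂P, Set.InjOn (fun i => U i ω) s) (hk : k < #s) :
    ∑ p ∈ rankPairs s k, P {ω | p.2 = belowSet s (fun i => U i ω) p.1} = 1 := by
  rw [← measure_biUnion_finset₀ (pairwise_aedisjoint_eq_belowSet hU)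
    fun p _ => (measurableSet_eq_belowSet hm s p.1 p.2).nullMeasurableSet]
  have hcover :
      ∀ᵐ ω ∂P, ω ∈ ⋃ p ∈ rankPairs s k, {ω | p.2 = belowSet s (fun i => U i ω) p.1} := by
    filter_upwards [hU] with ω hω
    obtain ⟨i, hi, hik⟩ := exists_card_belowSet_eq hω hk
    obtain ⟨p, hp, -, hpω⟩ := (exists_rankPairs_iff fun _ _ => True).2 ⟨i, hi, hik, trivial⟩
    exact Set.mem_biUnion hp hpω
  rw [← measure_univ (μ := P)]
  exact measure_congr (Filter.eventuallyEq_univ.2 hcover)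

end Probability

theorem stmt2_general {Ω : Type*} [MeasurableSpace Ω] (P : Measure Ω) [IsProbabilityMeasure P]
    (Ntilde : Ω → ℕ) (Nk : ℕ → Ω → ℕ) (U : ℕ → Ω → ℝ)
    (hNkmeas : ∀ k, Measurable (Nk k))
    (hUmeas : ∀ k, Measurable (U k))
    (hNid : ∀ k, IdentDistrib (Nk k) Ntilde P P)
    (hUlaw : ∀ k, Measure.map (U k) P = volume.restrict (Set.Icc (0 : ℝ) 1))
    (hNindep : iIndepFun Nk P)
    (hUindep : iIndepFun U P)
    (hNU : Indep (⨆ k, MeasurableSpace.comap (Nk k) inferInstance)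
      (⨆ k, MeasurableSpace.comap (U k) inferInstance) P)
    (Smin : ℕ → Ω → ℝ)
    (hSmin : ∀ l ω, Smin l ω
      = minOr 2 ((Finset.range l).filter fun k => 1 ≤ Nk k ω) (fun k => U k ω))
    (K : ℕ → Ω → ℕ)
    (hK : ∀ l ω, K l ω = ((Finset.range l).filter fun k => U k ω < Smin l ω).card)
    (k ℓ : ℕ) (hkℓ : k < ℓ) :
    P {ω | 0 < (∑ j ∈ Finset.range ℓ, Nk j ω) ∧ K ℓ ω = k}
      = (P {ω | Ntilde ω = 0}) ^ k * P {ω | 0 < Ntilde ω} := by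
  set s := Finset.range ℓ
  let F : ℕ × Finset ℕ → Set Ω := fun p => {ω | 0 < Nk p.1 ω ∧ ∀ j ∈ p.2, Nk j ω = 0}
  let G : ℕ × Finset ℕ → Set Ω := fun p => {ω | p.2 = belowSet s (fun i => U i ω) p.1}
  have hE : {ω | 0 < (∑ j ∈ s, Nk j ω) ∧ K ℓ ω = k} = ⋃ p ∈ rankPairs s k, F p ∩ G p := by
    ext ω
    simp only [Set.mem_ofPred_eq, hK, hSmin, Set.mem_iUnion₂, Set.mem_inter_iff, exists_prop]
    rw [pos_sum_and_card_filter_lt_minOr_iff]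
    exact (exists_rankPairs_iff (u := fun i => U i ω)
      fun m B => 0 < Nk m ω ∧ ∀ j ∈ B, Nk j ω = 0).symm
  have hUinj : ∀ᵐ ω ∂P, Set.InjOn (fun i => U i ω) s := by
    have (i : ℕ) : NullSingletonClass (P.map (U i)) := by rw [hUlaw i]; infer_instance
    exact (hUindep.ae_injective hUmeas).mono fun ω h => h.injOn
  have hFmeas {m : MeasurableSpace Ω} (hm : ∀ i, Measurable[m] (Nk i)) (p : ℕ × Finset ℕ) :
      MeasurableSet[m] (F p) :=
    measurableSet_setOfPred.2 ((measurableSet_lt measurable_const (hm p.1)).mem.and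
      (Measurable.forall fun j =>
        measurable_const.imp ((measurableSet_singleton 0).preimage (hm j)).mem))
  have hF (p) (hp : p ∈ rankPairs s k) :
      P (F p) = P {ω | 0 < Ntilde ω} * P {ω | Ntilde ω = 0} ^ k := by
    obtain ⟨-, -, hcard, hnotMem⟩ := mem_rankPairs.1 hp
    rw [← hcard]
    exact hNindep.measure_mem_and_forall_mem hNid measurableSet_Ioi (measurableSet_singleton 0)
      hnotMem
  have hFG (p) : P (F p ∩ G p) = P (F p) * P (G p) :=
    (Indep_iff _ _ _).1 hNU _ _ (hFmeas (measurable_of_iSup_comap Nk) p)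
      (measurableSet_eq_belowSet (measurable_of_iSup_comap U) s p.1 p.2)
  calc P {ω | 0 < (∑ j ∈ s, Nk j ω) ∧ K ℓ ω = k}
      = ∑ p ∈ rankPairs s k, P (F p ∩ G p) := by
        rw [hE]
        refine measure_biUnion_finset₀ (fun p hp q hq hpq => ?_) fun p _ =>
          ((hFmeas hNkmeas p).inter (measurableSet_eq_belowSet hUmeas s p.1 p.2)).nullMeasurableSet
        exact ((pairwise_aedisjoint_eq_belowSet hUinj) hp hq hpq).mono Set.inter_subset_right
          Set.inter_subset_right
    _ = P {ω | 0 < Ntilde ω} * P {ω | Ntilde ω = 0} ^ k * ∑ p ∈ rankPairs s k, P (G p) := by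
        rw [Finset.mul_sum]
        exact Finset.sum_congr rfl fun p hp => by rw [hFG, hF p hp]
    _ = P {ω | Ntilde ω = 0} ^ k * P {ω | 0 < Ntilde ω} := by
        rw [sum_rankPairs_measure_eq_belowSet_eq_one hUmeas hUinj (by simpa [s] using hkℓ),
          mul_one, mul_comm]

/-- Let `Ñ` be an `ℕ`-valued random variable, `Ñ₁, Ñ₂, …` i.i.d. copies of
`Ñ`, and, independently, `U₁, U₂, …` i.i.d. Uniform[0,1] random variables. For `ℓ ≥ 1` set
`S^{(ℓ)} := min{U_k : Ñ_k ≥ 1, 1 ≤ k ≤ ℓ}` (min ∅ := 2) and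
`K^{(ℓ)} := #{k ≤ ℓ : U_k < S^{(ℓ)}}`. Then for all `0 ≤ k < ℓ`:
`P(Ñ₁ + ⋯ + Ñ_ℓ > 0, K^{(ℓ)} = k) = P(Ñ = 0)^k · P(Ñ > 0)`. -/
theorem stmt2 {Ω : Type*} [MeasurableSpace Ω] (P : Measure Ω) [IsProbabilityMeasure P]
    (Ntilde : Ω → ℕ) (Nk : ℕ → Ω → ℕ) (U : ℕ → Ω → ℝ)
    (hNtmeas : Measurable Ntilde) (hNkmeas : ∀ k, Measurable (Nk k))
    (hUmeas : ∀ k, Measurable (U k))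
    (hNid : ∀ k, IdentDistrib (Nk k) Ntilde P P)
    (hUlaw : ∀ k, Measure.map (U k) P = volume.restrict (Set.Icc (0 : ℝ) 1))
    (hNindep : iIndepFun Nk P)
    (hUindep : iIndepFun U P)
    (hNU : Indep (⨆ k, MeasurableSpace.comap (Nk k) inferInstance)
      (⨆ k, MeasurableSpace.comap (U k) inferInstance) P)
    (Smin : ℕ → Ω → ℝ)
    (hSmin : ∀ l ω, Smin l ω
      = minOr 2 ((Finset.range l).filter fun k => 1 ≤ Nk k ω) (fun k => U k ω))
    (K : ℕ → Ω → ℕ)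
    (hK : ∀ l ω, K l ω = ((Finset.range l).filter fun k => U k ω < Smin l ω).card)
    (k ℓ : ℕ) (hkℓ : k < ℓ) :
    P {ω | 0 < (∑ j ∈ Finset.range ℓ, Nk j ω) ∧ K ℓ ω = k}
      = (P {ω | Ntilde ω = 0}) ^ k * P {ω | 0 < Ntilde ω} :=
  stmt2_general P Ntilde Nk U hNkmeas hUmeas hNid hUlaw hNindep hUindep hNU Smin hSmin K hK k ℓ hkℓ
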